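/- arXiv:1704.04548 — 5 statements merged into one kernel-verified Lean document; each statement's English description precedes it below -/
import Mathlib

section
/- Define F(ε,γ) := √((γ/(1-γ))² + 1 - ε/(1-γ)) - γ/(1-γ) for 0 ≤ γ < 1 and 0 < ε < 1 - γ. Then F(ε,γ) ≥ (1/(2√2)) · min( √(1 - ε/(1-γ)), (1 - γ - ε)/γ ). -/
/-!
With `a = γ/(1-γ)` and `t = 1 - ε/(1-γ) > 0` the claim reads
`√(a² + t) - a ≥ min(√t, t/a) / (2√2)`. Any `m ≥ 0` with `m ≤ √t` and `a m ≤ t` satisfies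
`(a + m/(2√2))² ≤ a² + t`, because `2a · m/(2√2) ≤ t/√2` and `(m/(2√2))² ≤ t/8`, and
`1/√2 + 1/8 < 1`; both `m = min(√t, t/a)` and, for `a = 0`, `m = √t` qualify.
-/

lemma le_sqrt_sq_add_sub {a t c : ℝ} (ha : 0 ≤ a) (hc : 0 ≤ c) (h : 2 * a * c + c ^ 2 ≤ t) :
    c ≤ √(a ^ 2 + t) - a := by
  have : a + c ≤ √(a ^ 2 + t) := (Real.le_sqrt (by positivity) (by nlinarith)).2 (by nlinarith)
  linarith

lemma inv_two_sqrt_two_mul_le_sqrt_sq_add_sub {a t m : ℝ} (ha : 0 ≤ a) (hm : 0 ≤ m)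
    (hm_sqrt : m ≤ √t) (ham : a * m ≤ t) :
    1 / (2 * √2) * m ≤ √(a ^ 2 + t) - a := by
  have hsqrt2_sq : √2 ^ 2 = 2 := Real.sq_sqrt (by norm_num)
  have hsqrt2_le : √2 ≤ 7 / 4 := by nlinarith [Real.sqrt_nonneg 2]
  have hcoef : 1 / (2 * √2) = √2 / 4 := by
    field_simp
    linarith
  have hm_sq : m ^ 2 ≤ t := by
    have := pow_le_pow_left₀ hm hm_sqrt 2
    rwa [Real.sq_sqrt (by nlinarith)] at this
  have ht : 0 ≤ t := (sq_nonneg m).trans hm_sq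
  rw [hcoef]
  apply le_sqrt_sq_add_sub ha (by positivity)
  calc 2 * a * (√2 / 4 * m) + (√2 / 4 * m) ^ 2
      = √2 / 2 * (a * m) + 1 / 8 * m ^ 2 := by rw [mul_pow, div_pow, hsqrt2_sq]; ring
    _ ≤ 7 / 8 * t + 1 / 8 * t :=
      add_le_add (mul_le_mul (by linarith) ham (by positivity) (by norm_num)) (by linarith)
    _ = t := by ring

theorem stmt2_general (γ ε : ℝ) (hγ1 : γ < 1) (hε1 : ε < 1 - γ) :
    (γ = 0 →
      (1 / (2 * Real.sqrt 2)) * Real.sqrt (1 - ε / (1 - γ)) ≤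
        Real.sqrt ((γ / (1 - γ)) ^ 2 + 1 - ε / (1 - γ)) - γ / (1 - γ)) ∧
    (0 < γ →
      (1 / (2 * Real.sqrt 2)) *
          min (Real.sqrt (1 - ε / (1 - γ))) ((1 - γ - ε) / γ) ≤
        Real.sqrt ((γ / (1 - γ)) ^ 2 + 1 - ε / (1 - γ)) - γ / (1 - γ)) := by
  have hs : 0 < 1 - γ := by linarith
  have ht : 0 < 1 - ε / (1 - γ) := by
    rw [sub_pos, div_lt_one hs]
    exact hε1
  rw [add_sub_assoc]
  constructor
  · rintro rfl
    exact inv_two_sqrt_two_mul_le_sqrt_sq_add_sub (by simp) (Real.sqrt_nonneg _) le_rfl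
      (by simpa using ht.le)
  · intro hγ
    have ha : 0 < γ / (1 - γ) := div_pos hγ hs
    have hsecond : (1 - γ - ε) / γ = (1 - ε / (1 - γ)) / (γ / (1 - γ)) := by
      field_simp
    rw [hsecond]
    refine inv_two_sqrt_two_mul_le_sqrt_sq_add_sub ha.le
      (le_min (Real.sqrt_nonneg _) (by positivity)) (min_le_left _ _) ?_
    calc γ / (1 - γ) * min _ ((1 - ε / (1 - γ)) / (γ / (1 - γ)))
        ≤ γ / (1 - γ) * ((1 - ε / (1 - γ)) / (γ / (1 - γ))) := by gcongr; exact min_le_right _ _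
      _ = 1 - ε / (1 - γ) := mul_div_cancel₀ _ ha.ne'

/-- Lower bound on `F(ε,γ) := √((γ/(1-γ))² + 1 - ε/(1-γ)) - γ/(1-γ)` for `0 ≤ γ < 1`,
`0 < ε < 1-γ`.  When `γ = 0` the second term of the min is interpreted as `+∞`, i.e. the
bound reduces to the first term. -/
theorem stmt2 (γ ε : ℝ) (hγ0 : 0 ≤ γ) (hγ1 : γ < 1) (hε0 : 0 < ε) (hε1 : ε < 1 - γ) :
    (γ = 0 →
      (1 / (2 * Real.sqrt 2)) * Real.sqrt (1 - ε / (1 - γ)) ≤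
        Real.sqrt ((γ / (1 - γ)) ^ 2 + 1 - ε / (1 - γ)) - γ / (1 - γ)) ∧
    (0 < γ →
      (1 / (2 * Real.sqrt 2)) *
          min (Real.sqrt (1 - ε / (1 - γ))) ((1 - γ - ε) / γ) ≤
        Real.sqrt ((γ / (1 - γ)) ^ 2 + 1 - ε / (1 - γ)) - γ / (1 - γ)) :=
  stmt2_general γ ε hγ1 hε1
end

section
/- Let X and Y be Gaussian random vectors in ℝ^d with X ~ N(μ_X, Σ) and Y ~ N(μ_Y, Σ), where Σ is positive semidefinite and μ_X - μ_Y lies in the orthogonal complement of the kernel of Σ. Then the Kullback–Leibler divergence KL(law(X), law(Y)) = (1/2)·(μ_X - μ_Y)ᵀ Σ† (μ_X - μ_Y), where Σ† is the Moore–Penrose pseudoinverse of Σ. -/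
/-
Let `A` be the symmetric square root of `S` used in `gaussianVec`, so `A * A = S`. If
`μX = μY + S v` then `μX + A x = μY + A (x + A v)`: `N(μX, S)` is the image under `x ↦ μY + A x`
of a standard Gaussian shifted by `A v`. By Cameron–Martin the shifted standard Gaussian has density
`exp (⟪A v, x⟫ - ‖A v‖² / 2)`, and since `⟪A v, x⟫ = ⟪v, A x⟫` this pushes forward to the density
`exp (⟪v, y - μY⟫ - ⟪v, S v⟫ / 2)` of `N(μX, S)` with respect to `N(μY, S)`. Integrating its
logarithm against `N(μX, S)`, whose mean is `μX`, gives `⟪v, S v⟫ / 2`. The range hypothesis lets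
us take `v = S† (μX - μY)`, because `S S†` fixes the range of `S`.
-/

open Matrix MeasureTheory ProbabilityTheory

/-- The (possibly degenerate) multivariate Gaussian `N(m, S)` on `ℝ^d`, defined as the
pushforward of a standard Gaussian vector under `x ↦ m + √S x`. -/
noncomputable def gaussianVec {d : ℕ} (m : Fin d → ℝ) {S : Matrix (Fin d) (Fin d) ℝ}
    (hS : S.PosSemidef) : Measure (Fin d → ℝ) :=
  (Measure.pi fun _ : Fin d => gaussianReal 0 1).map fun x => m + (hS.1.eigenvectorUnitary.1 * Matrix.diagonal (fun i => Real.sqrt (hS.1.eigenvalues i)) *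
    (star hS.1.eigenvectorUnitary : Matrix (Fin d) (Fin d) ℝ)).mulVec x

/-- Moore–Penrose pseudoinverse of a Hermitian real matrix, via the spectral decomposition
(inverting the nonzero eigenvalues; `(0 : ℝ)⁻¹ = 0`). -/
noncomputable def pinvSym {d : ℕ} {S : Matrix (Fin d) (Fin d) ℝ} (hS : S.IsHermitian) :
    Matrix (Fin d) (Fin d) ℝ :=
  hS.eigenvectorUnitary.1 * Matrix.diagonal (fun i => (hS.eigenvalues i)⁻¹) *
    (star hS.eigenvectorUnitary : Matrix (Fin d) (Fin d) ℝ)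

/-- Kullback–Leibler divergence `∫ log (dμ/dν) dμ`. -/
noncomputable def klDiv' {α : Type*} [MeasurableSpace α] (μ ν : Measure α) : ℝ :=
  ∫ x, Real.log (μ.rnDeriv ν x).toReal ∂μ

open Real
open scoped ENNReal

section PiWithDensity

variable {ι : Type*} [Fintype ι] {α : ι → Type*} [∀ i, MeasurableSpace (α i)]
  {μ : (i : ι) → Measure (α i)} [∀ i, IsProbabilityMeasure (μ i)]

theorem lintegral_pi_prod_eq_prod {f : (i : ι) → α i → ℝ≥0∞} (hf : ∀ i, Measurable (f i)) :
    ∫⁻ x, ∏ i, f i (x i) ∂Measure.pi μ = ∏ i, ∫⁻ y, f i y ∂μ i := by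
  rw [lintegral_prod_eq_prod_lintegral_of_indepFun _ _
    (iIndepFun_pi fun i => (hf i).aemeasurable) fun i => (hf i).comp (measurable_pi_apply i)]
  exact Finset.prod_congr rfl fun i _ => (measurePreserving_eval μ i).lintegral_comp (hf i)

theorem pi_withDensity {f : (i : ι) → α i → ℝ≥0∞} (hf : ∀ i, Measurable (f i))
    [∀ i, SigmaFinite ((μ i).withDensity (f i))] :
    Measure.pi (fun i => (μ i).withDensity (f i))
      = (Measure.pi μ).withDensity fun x => ∏ i, f i (x i) := by
  refine Measure.pi_eq (μ := fun i => (μ i).withDensity (f i)) fun s hs => ?_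
  have hbox : (Set.univ.pi s).indicator (fun x => ∏ i, f i (x i))
      = fun x => ∏ i, (s i).indicator (f i) (x i) := by
    ext x
    classical
    simp only [Set.indicator_apply, Finset.prod_ite_zero, Set.mem_univ_pi, Finset.mem_univ,
      true_implies]
  rw [withDensity_apply _ (MeasurableSet.univ_pi hs),
    ← lintegral_indicator (MeasurableSet.univ_pi hs), hbox,
    lintegral_pi_prod_eq_prod fun i => (hf i).indicator (hs i)]
  exact Finset.prod_congr rfl fun i _ => by
    rw [lintegral_indicator (hs i), withDensity_apply _ (hs i)]

end PiWithDensity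

theorem map_withDensity_comp {α β : Type*} [MeasurableSpace α] [MeasurableSpace β] (μ : Measure α)
    {T : α → β} (hT : Measurable T) {f : β → ℝ≥0∞} (hf : Measurable f) :
    (μ.withDensity (f ∘ T)).map T = (μ.map T).withDensity f := by
  ext s hs
  rw [Measure.map_apply hT hs, withDensity_apply _ hs, withDensity_apply _ (hT hs),
    setLIntegral_map hs hf hT, Function.comp_def]

theorem klDiv'_withDensity_ofReal_exp {α : Type*} [MeasurableSpace α] (μ : Measure α)
    [SigmaFinite μ] {g : α → ℝ} (hg : Measurable g) :
    klDiv' (μ.withDensity fun x => ENNReal.ofReal (exp (g x))) μ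
      = ∫ x, g x ∂μ.withDensity fun x => ENNReal.ofReal (exp (g x)) := by
  have hrn := Measure.rnDeriv_withDensity μ
    (by fun_prop : Measurable fun x => ENNReal.ofReal (exp (g x)))
  refine integral_congr_ae ?_
  filter_upwards [(withDensity_absolutelyContinuous _ _).ae_eq hrn] with x hx
  rw [hx, ENNReal.toReal_ofReal (exp_nonneg _), log_exp]

theorem gaussianReal_eq_withDensity_exp (w : ℝ) :
    gaussianReal w 1 = (gaussianReal 0 1).withDensity
      fun x => ENNReal.ofReal (exp (w * x - w ^ 2 / 2)) := by
  rw [gaussianReal_of_var_ne_zero _ one_ne_zero, gaussianReal_of_var_ne_zero _ one_ne_zero,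
    ← withDensity_mul _ (measurable_gaussianPDF 0 1) (by fun_prop)]
  congr 1
  funext x
  simp only [Pi.mul_apply, gaussianPDF_def, gaussianPDFReal_def]
  rw [← ENNReal.ofReal_mul (by positivity), mul_assoc _ (rexp _), ← exp_add]
  congr 3
  push_cast
  ring

section StdGaussianPi

variable {ι : Type*} [Fintype ι]

theorem pi_gaussianReal_map_add (w : ι → ℝ) :
    (Measure.pi fun _ : ι => gaussianReal 0 1).map (· + w)
      = (Measure.pi fun _ : ι => gaussianReal 0 1).withDensity
          fun x => ENNReal.ofReal (exp (w ⬝ᵥ x - w ⬝ᵥ w / 2)) := by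
  have hshift : (Measure.pi fun _ : ι => gaussianReal 0 1).map (· + w)
      = Measure.pi fun i => gaussianReal (w i) 1 :=
    (measurePreserving_pi _ _ fun i => ⟨measurable_add_const _,
      by simpa using gaussianReal_map_add_const (μ := 0) (v := 1) (w i)⟩).map_eq
  have hdens := fun i => gaussianReal_eq_withDensity_exp (w i)
  have : ∀ i, SigmaFinite ((gaussianReal 0 1).withDensity
      fun x => ENNReal.ofReal (exp (w i * x - w i ^ 2 / 2))) := fun i => by
    rw [← hdens i]; infer_instance
  rw [hshift, show (fun i => gaussianReal (w i) 1) = _ from funext hdens,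
    pi_withDensity fun i => by fun_prop]
  congr 1
  funext x
  rw [← ENNReal.ofReal_prod_of_nonneg fun i _ => exp_nonneg _, ← exp_sum, Finset.sum_sub_distrib,
    ← Finset.sum_div]
  simp [dotProduct, sq]

theorem integrable_dotProduct_pi_gaussianReal (w : ι → ℝ) :
    Integrable (fun x => w ⬝ᵥ x) (Measure.pi fun _ : ι => gaussianReal 0 1) :=
  integrable_finsetSum _ fun i _ => (integrable_eval IsGaussian.integrable_id).const_mul (w i)

theorem integral_dotProduct_pi_gaussianReal (w : ι → ℝ) :
    ∫ x, w ⬝ᵥ x ∂Measure.pi (fun _ : ι => gaussianReal 0 1) = 0 := by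
  simp_rw [dotProduct]
  rw [integral_finsetSum _ fun i _ =>
    (integrable_eval IsGaussian.integrable_id).const_mul (w i)]
  simp [integral_const_mul, integral_eval, integral_id_gaussianReal]

end StdGaussianPi

namespace Matrix.IsHermitian

variable {n : Type*} [Fintype n] [DecidableEq n] {S : Matrix n n ℝ}

-- The `√S` of `gaussianVec` and `pinvSym` are, definitionally, `spectralMatrix` of `√λ` and `λ⁻¹`.
noncomputable def spectralMatrix (hS : S.IsHermitian) (a : n → ℝ) : Matrix n n ℝ :=
  hS.eigenvectorUnitary.1 * diagonal a * (star hS.eigenvectorUnitary : Matrix n n ℝ)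

theorem spectralMatrix_mul_spectralMatrix (hS : S.IsHermitian) (a b : n → ℝ) :
    hS.spectralMatrix a * hS.spectralMatrix b = hS.spectralMatrix (a * b) := by
  have hU : (star hS.eigenvectorUnitary : Matrix n n ℝ) * hS.eigenvectorUnitary.1 = 1 :=
    UnitaryGroup.star_mul_self _
  simp only [spectralMatrix, Matrix.mul_assoc]
  rw [← Matrix.mul_assoc (star hS.eigenvectorUnitary : Matrix n n ℝ), hU, Matrix.one_mul,
    ← Matrix.mul_assoc (diagonal a), diagonal_mul_diagonal]
  rfl

theorem spectralMatrix_eigenvalues (hS : S.IsHermitian) : hS.spectralMatrix hS.eigenvalues = S :=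
  hS.spectral_theorem.symm

theorem transpose_spectralMatrix (hS : S.IsHermitian) (a : n → ℝ) :
    (hS.spectralMatrix a)ᵀ = hS.spectralMatrix a := by
  rw [← conjTranspose_eq_transpose_of_trivial]
  simp only [spectralMatrix, conjTranspose_mul, diagonal_conjTranspose, star_trivial,
    star_eq_conjTranspose, conjTranspose_conjTranspose, Matrix.mul_assoc]

theorem mul_spectralMatrix_inv_mul_self (hS : S.IsHermitian) :
    S * hS.spectralMatrix (hS.eigenvalues)⁻¹ * S = S := by
  calc S * hS.spectralMatrix (hS.eigenvalues)⁻¹ * S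
      = hS.spectralMatrix hS.eigenvalues * hS.spectralMatrix (hS.eigenvalues)⁻¹
          * hS.spectralMatrix hS.eigenvalues := by rw [hS.spectralMatrix_eigenvalues]
    _ = hS.spectralMatrix hS.eigenvalues := by
      rw [spectralMatrix_mul_spectralMatrix, spectralMatrix_mul_spectralMatrix]
      congr 1
      funext i
      by_cases h : hS.eigenvalues i = 0 <;> simp [h]
    _ = S := hS.spectralMatrix_eigenvalues

end Matrix.IsHermitian

open Matrix.IsHermitian

theorem mulVec_pinvSym_mulVec_of_mem_range {d : ℕ} {S : Matrix (Fin d) (Fin d) ℝ}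
    (hS : S.IsHermitian) {x : Fin d → ℝ} (hx : x ∈ LinearMap.range S.mulVecLin) : S *ᵥ (pinvSym hS *ᵥ x) = x := by
  obtain ⟨u, rfl⟩ := hx
  change S *ᵥ (hS.spectralMatrix (hS.eigenvalues)⁻¹ *ᵥ (S *ᵥ u)) = S *ᵥ u
  rw [mulVec_mulVec, mulVec_mulVec, hS.mul_spectralMatrix_inv_mul_self]

section GaussianVec

variable {d : ℕ} {S : Matrix (Fin d) (Fin d) ℝ}

theorem gaussianVec_eq_map (m : Fin d → ℝ) (hS : S.PosSemidef) :
    gaussianVec m hS = (Measure.pi fun _ : Fin d => gaussianReal 0 1).map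
      fun x => m + hS.1.spectralMatrix (fun i => √(hS.1.eigenvalues i)) *ᵥ x :=
  rfl

theorem spectralMatrix_sqrt_mul_self (hS : S.PosSemidef) :
    hS.1.spectralMatrix (fun i => √(hS.1.eigenvalues i))
      * hS.1.spectralMatrix (fun i => √(hS.1.eigenvalues i)) = S := by
  rw [spectralMatrix_mul_spectralMatrix]
  conv_rhs => rw [← hS.1.spectralMatrix_eigenvalues]
  congr 1
  funext i
  exact Real.mul_self_sqrt (hS.eigenvalues_nonneg i)

instance (m : Fin d → ℝ) (hS : S.PosSemidef) : IsProbabilityMeasure (gaussianVec m hS) :=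
  Measure.isProbabilityMeasure_map (by fun_prop)

theorem integrable_dotProduct_gaussianVec (v m : Fin d → ℝ) (hS : S.PosSemidef) :
    Integrable (fun y => v ⬝ᵥ y) (gaussianVec m hS) := by
  rw [gaussianVec_eq_map, integrable_map_measure (by fun_prop) (by fun_prop)]
  simp only [Function.comp_def, dotProduct_add, dotProduct_mulVec]
  exact (integrable_const _).add (integrable_dotProduct_pi_gaussianReal _)

theorem integral_dotProduct_gaussianVec (v m : Fin d → ℝ) (hS : S.PosSemidef) :
    ∫ y, v ⬝ᵥ y ∂gaussianVec m hS = v ⬝ᵥ m := by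
  rw [gaussianVec_eq_map, integral_map (by fun_prop) (by fun_prop)]
  simp only [dotProduct_add, dotProduct_mulVec]
  rw [integral_add (integrable_const _) (integrable_dotProduct_pi_gaussianReal _),
    integral_dotProduct_pi_gaussianReal]
  simp

theorem gaussianVec_add_mulVec (m v : Fin d → ℝ) (hS : S.PosSemidef) :
    gaussianVec (m + S *ᵥ v) hS = (gaussianVec m hS).withDensity
      fun y => ENNReal.ofReal (exp (v ⬝ᵥ (y - m) - v ⬝ᵥ S *ᵥ v / 2)) := by
  set A := hS.1.spectralMatrix fun i => √(hS.1.eigenvalues i)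
  set γ := Measure.pi fun _ : Fin d => gaussianReal 0 1
  have hAA : A * A = S := spectralMatrix_sqrt_mul_self hS
  have hvA : ∀ x, v ⬝ᵥ A *ᵥ x = A *ᵥ v ⬝ᵥ x := fun x => by
    rw [dotProduct_mulVec, ← mulVec_transpose, transpose_spectralMatrix]
  have hT : Measurable fun x => m + A *ᵥ x := by fun_prop
  calc gaussianVec (m + S *ᵥ v) hS
      = (γ.map (· + A *ᵥ v)).map fun x => m + A *ᵥ x := by
        rw [Measure.map_map hT (by fun_prop), gaussianVec_eq_map]
        congr 1
        funext x
        simp only [Function.comp_apply, mulVec_add, mulVec_mulVec, hAA]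
        abel
    _ = (γ.withDensity ((fun y => ENNReal.ofReal (exp (v ⬝ᵥ (y - m) - v ⬝ᵥ S *ᵥ v / 2)))
          ∘ fun x => m + A *ᵥ x)).map fun x => m + A *ᵥ x := by
        rw [pi_gaussianReal_map_add]
        congr 3
        funext x
        simp only [Function.comp_apply, add_sub_cancel_left, hvA, ← hAA, ← mulVec_mulVec]
    _ = _ := by rw [map_withDensity_comp γ hT (by fun_prop), gaussianVec_eq_map]

theorem klDiv'_gaussianVec_add_mulVec (m v : Fin d → ℝ) (hS : S.PosSemidef) :
    klDiv' (gaussianVec (m + S *ᵥ v) hS) (gaussianVec m hS) = v ⬝ᵥ S *ᵥ v / 2 := by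
  rw [gaussianVec_add_mulVec, klDiv'_withDensity_ofReal_exp _ (by fun_prop),
    ← gaussianVec_add_mulVec]
  simp only [dotProduct_sub, sub_sub]
  rw [integral_sub (integrable_dotProduct_gaussianVec _ _ _) (integrable_const _),
    integral_dotProduct_gaussianVec, integral_const]
  simp only [probReal_univ, one_smul, dotProduct_add]
  ring

end GaussianVec

/-- KL divergence between two Gaussians with the same psd covariance `S` whose mean
difference lies in `(ker S)^⊥ = range S` equals `½ (μX-μY)ᵀ S† (μX-μY)`. -/
theorem stmt4 {d : ℕ} (μX μY : Fin d → ℝ) (S : Matrix (Fin d) (Fin d) ℝ)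
    (hS : S.PosSemidef) (hmem : μX - μY ∈ LinearMap.range S.mulVecLin) :
    klDiv' (gaussianVec μX hS) (gaussianVec μY hS)
      = (1 / 2) * ((μX - μY) ⬝ᵥ (pinvSym hS.1).mulVec (μX - μY)) := by
  have hshift : μY + S *ᵥ (pinvSym hS.1 *ᵥ (μX - μY)) = μX := by
    rw [mulVec_pinvSym_mulVec_of_mem_range hS.1 hmem, add_sub_cancel]
  rw [← hshift, klDiv'_gaussianVec_add_mulVec, hshift, mulVec_pinvSym_mulVec_of_mem_range hS.1 hmem,
    dotProduct_comm]
  ring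
end

section
/- Let f : (0,∞) → ℝ be convex and let μ, ν be finite nonnegative measures with μ ≪ ν on (X, F). For a measurable map Γ : (X,F) → (Y,G) let μΓ⁻¹, νΓ⁻¹ denote the pushforward measures. Then the generalized f-divergence satisfies the data-processing inequality D_f(μ, ν) ≥ D_f(μΓ⁻¹, νΓ⁻¹). -/
/-!
A convex `f` on `[0, ∞)` is continuous on `(0, ∞)` and can only jump up at `0`. On `[0, ∞)` write
`f = g + (f 0 - g 0) • 𝟙_{0}`, where `g` agrees with `f` on `(0, ∞)` and takes the right limit
of `f` at `0`. Then `g` is convex and continuous on `[0, ∞)`, so conditional Jensen, applied to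
`dμ/dν`, whose conditional expectation given `Γ` is `(dμΓ⁻¹/dνΓ⁻¹) ∘ Γ`, gives
`D_g(μΓ⁻¹, νΓ⁻¹) ≤ D_g(μ, ν)`. The remaining term is `f 0 - g 0 ≥ 0` times the `ν`-mass of the set
where the density vanishes, and that mass can only shrink under pushforward: `μ` does not charge
`Γ⁻¹ {dμΓ⁻¹/dνΓ⁻¹ = 0}`, so `dμ/dν = 0` `ν`-a.e. there.
-/

open MeasureTheory Set Filter Topology

lemma ConvexOn.exists_tendsto_nhdsGT {f : ℝ → ℝ} {a : ℝ} (hf : ConvexOn ℝ (Ici a) f) :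
    ∃ L ≤ f a, Tendsto f (𝓝[>] a) (𝓝 L) := by
  -- the slopes of `f` from `a + 1` decrease as the other endpoint tends to `a`, and are bounded
  -- below by the slope to `a` itself
  have hb : a + 1 ∈ Ici a := by simp
  have hslope : MonotoneOn (slope f (a + 1)) (Ici a \ {a + 1}) := hf.slope_mono hb
  have hmono : MonotoneOn (slope f (a + 1)) (Ioo a (a + 1)) :=
    hslope.mono fun t ht ↦ ⟨ht.1.le, ht.2.ne⟩
  have hlow : ∀ t ∈ Ioo a (a + 1), slope f (a + 1) a ≤ slope f (a + 1) t := fun t ht ↦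
    hslope ⟨self_mem_Ici, by simp⟩ ⟨ht.1.le, ht.2.ne⟩ ht.1.le
  have hS := hmono.tendsto_nhdsWithin_Ioo_right (by simp) ⟨_, forall_mem_image.2 hlow⟩
  refine ⟨f (a + 1) + (a - (a + 1)) * sInf (slope f (a + 1) '' Ioo a (a + 1)), ?_, ?_⟩
  · have : slope f (a + 1) a ≤ sInf (slope f (a + 1) '' Ioo a (a + 1)) :=
      le_csInf (by simp) (forall_mem_image.2 hlow)
    have hfa := sub_smul_slope_vadd f (a + 1) a
    simp only [smul_eq_mul, vadd_eq_add] at hfa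
    nlinarith
  · refine (tendsto_const_nhds.add
      (((tendsto_id.mono_left nhdsWithin_le_nhds).sub_const (a + 1)).mul hS)).congr fun t ↦ ?_
    simpa [add_comm] using sub_smul_slope_vadd f (a + 1) t

noncomputable def rightLimExtend (a : ℝ) (f : ℝ → ℝ) : ℝ → ℝ :=
  (Ioi a).piecewise f fun _ ↦ limUnder (𝓝[>] a) f

section rightLimExtend

variable {f : ℝ → ℝ} {a : ℝ}

lemma rightLimExtend_of_lt {t : ℝ} (ht : a < t) : rightLimExtend a f t = f t := by
  simp [rightLimExtend, ht]

lemma comp_eq_rightLimExtend_comp_add_indicator {α : Type*} {ρ : α → ℝ} (hρa : ∀ x, a ≤ ρ x) :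
    (fun x ↦ f (ρ x)) = fun x ↦ rightLimExtend a f (ρ x) +
      {x | ρ x = a}.indicator (fun _ ↦ f a - rightLimExtend a f a) x := by
  ext x
  rcases (hρa x).eq_or_lt with h | h
  · simp [← h]
  · simp [rightLimExtend_of_lt h, h.ne']

variable {α : Type*} [MeasurableSpace α] {κ : Measure α} [IsFiniteMeasure κ] {ρ : α → ℝ}

lemma integrable_rightLimExtend_comp (hρ : Measurable ρ) (hρa : ∀ x, a ≤ ρ x)
    (h_int : Integrable (fun x ↦ f (ρ x)) κ) :
    Integrable (fun x ↦ rightLimExtend a f (ρ x)) κ := by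
  have hS : MeasurableSet {x | ρ x = a} := hρ (measurableSet_singleton a)
  rw [comp_eq_rightLimExtend_comp_add_indicator hρa] at h_int
  exact (h_int.sub ((integrable_const _).indicator hS)).congr
    (ae_of_all _ fun _ ↦ add_sub_cancel_right _ _)

lemma integral_comp_eq_integral_rightLimExtend_comp_add (hρ : Measurable ρ) (hρa : ∀ x, a ≤ ρ x)
    (h_int : Integrable (fun x ↦ rightLimExtend a f (ρ x)) κ) :
    ∫ x, f (ρ x) ∂κ =
      ∫ x, rightLimExtend a f (ρ x) ∂κ + κ.real {x | ρ x = a} * (f a - rightLimExtend a f a) := by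
  have hS : MeasurableSet {x | ρ x = a} := hρ (measurableSet_singleton a)
  rw [comp_eq_rightLimExtend_comp_add_indicator hρa,
    integral_add h_int ((integrable_const _).indicator hS), integral_indicator_const _ hS,
    smul_eq_mul]

namespace ConvexOn

lemma tendsto_rightLimExtend (hf : ConvexOn ℝ (Ici a) f) :
    Tendsto f (𝓝[>] a) (𝓝 (rightLimExtend a f a)) := by
  simpa [rightLimExtend] using
    tendsto_nhds_limUnder (hf.exists_tendsto_nhdsGT.imp fun _ ↦ And.right)

lemma rightLimExtend_le (hf : ConvexOn ℝ (Ici a) f) : rightLimExtend a f a ≤ f a := by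
  obtain ⟨L, hLf, hL⟩ := hf.exists_tendsto_nhdsGT
  exact (tendsto_nhds_unique hf.tendsto_rightLimExtend hL).trans_le hLf

lemma tendsto_nhdsGT_rightLimExtend (hf : ConvexOn ℝ (Ici a) f) {z : ℝ} (hz : a ≤ z) :
    Tendsto f (𝓝[>] z) (𝓝 (rightLimExtend a f z)) := by
  rcases hz.eq_or_lt with rfl | hz
  · exact hf.tendsto_rightLimExtend
  · rw [rightLimExtend_of_lt hz]
    have hcont : ContinuousOn f (Ioi a) := by simpa using hf.continuousOn_interior
    exact (hcont.continuousAt (Ioi_mem_nhds hz)).tendsto.mono_left nhdsWithin_le_nhds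

lemma tendsto_add_rightLimExtend (hf : ConvexOn ℝ (Ici a) f) {z : ℝ} (hz : a ≤ z) :
    Tendsto (fun ε ↦ f (z + ε)) (𝓝[>] 0) (𝓝 (rightLimExtend a f z)) := by
  refine (hf.tendsto_nhdsGT_rightLimExtend hz).comp
    (tendsto_nhdsWithin_of_tendsto_nhds_of_eventually_within _ ?_ ?_)
  · simpa using ((continuous_const_add z).tendsto 0).mono_left nhdsWithin_le_nhds
  · filter_upwards [self_mem_nhdsWithin] with ε hε using lt_add_of_pos_right z hε

protected lemma rightLimExtend (hf : ConvexOn ℝ (Ici a) f) :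
    ConvexOn ℝ (Ici a) (rightLimExtend a f) := by
  refine ⟨convex_Ici a, fun x hx y hy p q hp hq hpq ↦ ?_⟩
  refine le_of_tendsto_of_tendsto (hf.tendsto_add_rightLimExtend ((convex_Ici a) hx hy hp hq hpq))
    (((hf.tendsto_add_rightLimExtend hx).const_mul p).add
      ((hf.tendsto_add_rightLimExtend hy).const_mul q)) ?_
  filter_upwards [self_mem_nhdsWithin] with ε (hε : 0 < ε)
  have hxε : x + ε ∈ Ici a := by simp only [mem_Ici] at hx ⊢; linarith
  have hyε : y + ε ∈ Ici a := by simp only [mem_Ici] at hy ⊢; linarith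
  have hconv := hf.2 hxε hyε hp hq hpq
  simp only [smul_eq_mul] at hconv ⊢
  convert hconv using 2
  linear_combination ε * hpq.symm

lemma continuousWithinAt_rightLimExtend (hf : ConvexOn ℝ (Ici a) f) :
    ContinuousWithinAt (rightLimExtend a f) (Ici a) a := by
  rw [← continuousWithinAt_Ioi_iff_Ici, ContinuousWithinAt]
  refine hf.tendsto_rightLimExtend.congr' ?_
  filter_upwards [self_mem_nhdsWithin] with t ht using (rightLimExtend_of_lt ht).symm

lemma measurable_rightLimExtend (hf : ConvexOn ℝ (Ici a) f) : Measurable (rightLimExtend a f) := by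
  classical
  exact ContinuousOn.measurable_piecewise (by simpa using hf.continuousOn_interior)
    continuousOn_const measurableSet_Ioi

end ConvexOn

end rightLimExtend

section DataProcessing

variable {X Y : Type*} [MeasurableSpace X] [MeasurableSpace Y] {μ ν : Measure X}
  [IsFiniteMeasure μ] [IsFiniteMeasure ν] {f : ℝ → ℝ} {Γ : X → Y}

lemma ConvexOn.integral_comp_rnDeriv_map_le (hμν : μ ≪ ν) (hΓ : Measurable Γ)
    (hf_meas : StronglyMeasurable f) (hf : ConvexOn ℝ (Ici 0) f)
    (hf_cont : ContinuousWithinAt f (Ici 0) 0)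
    (h_int : Integrable (fun x ↦ f (μ.rnDeriv ν x).toReal) ν) :
    ∫ y, f ((μ.map Γ).rnDeriv (ν.map Γ) y).toReal ∂(ν.map Γ) ≤
      ∫ x, f (μ.rnDeriv ν x).toReal ∂ν := by
  have hmeas : AEStronglyMeasurable (fun y ↦ f ((μ.map Γ).rnDeriv (ν.map Γ) y).toReal) (ν.map Γ) :=
    (hf_meas.comp_measurable (Measure.measurable_rnDeriv _ _).ennreal_toReal).aestronglyMeasurable
  have h_int' := hf.integrable_comp_rnDeriv_map hμν hΓ hf_meas hf_cont h_int
  rw [integrable_map_measure hmeas hΓ.aemeasurable] at h_int'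
  rw [integral_map hΓ.aemeasurable hmeas]
  conv_rhs => rw [← integral_condExp hΓ.comap_le]
  exact integral_mono_ae h_int' integrable_condExp
    (hf.comp_rnDeriv_map_le hμν hΓ hf_meas hf_cont h_int)

lemma measure_map_rnDeriv_toReal_eq_zero_le (hμν : μ ≪ ν) (hΓ : Measurable Γ) :
    ν.map Γ {y | ((μ.map Γ).rnDeriv (ν.map Γ) y).toReal = 0} ≤
      ν {x | (μ.rnDeriv ν x).toReal = 0} := by
  have hZ : MeasurableSet {y | ((μ.map Γ).rnDeriv (ν.map Γ) y).toReal = 0} :=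
    (Measure.measurable_rnDeriv _ _).ennreal_toReal (measurableSet_singleton 0)
  have hμZ : μ (Γ ⁻¹' {y | ((μ.map Γ).rnDeriv (ν.map Γ) y).toReal = 0}) = 0 := by
    rw [← Measure.map_apply hΓ hZ, ← Measure.setLIntegral_rnDeriv (hμν.map hΓ),
      setLIntegral_eq_zero_iff hZ (Measure.measurable_rnDeriv _ _)]
    filter_upwards [Measure.rnDeriv_lt_top (μ.map Γ) (ν.map Γ)] with y hy hyZ
    simpa [ENNReal.toReal_eq_zero_iff, hy.ne] using hyZ
  rw [← Measure.setLIntegral_rnDeriv hμν, setLIntegral_eq_zero_iff (hΓ hZ)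
    (Measure.measurable_rnDeriv _ _)] at hμZ
  rw [Measure.map_apply hΓ hZ]
  refine measure_mono_ae (hμZ.mono fun x hx hxZ ↦ ?_)
  show (μ.rnDeriv ν x).toReal = 0
  simp [hx hxZ]

end DataProcessing

/-- Data-processing inequality for generalized `f`-divergences of finite nonnegative
measures: for convex `f`, `μ ≪ ν`, and measurable `Γ`,
`D_f(μΓ⁻¹, νΓ⁻¹) ≤ D_f(μ, ν)`. -/
theorem stmt15 {X Y : Type*} [MeasurableSpace X] [MeasurableSpace Y]
    (μ ν : Measure X) [IsFiniteMeasure μ] [IsFiniteMeasure ν] (hac : μ ≪ ν)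
    (f : ℝ → ℝ) (hf : ConvexOn ℝ (Set.Ici 0) f)
    (Γ : X → Y) (hΓ : Measurable Γ)
    (hint : Integrable (fun x => f ((μ.rnDeriv ν x).toReal)) ν) :
    ∫ y, f (((μ.map Γ).rnDeriv (ν.map Γ) y).toReal) ∂(ν.map Γ)
      ≤ ∫ x, f ((μ.rnDeriv ν x).toReal) ∂ν := by
  have hr : Measurable fun x ↦ (μ.rnDeriv ν x).toReal :=
    (Measure.measurable_rnDeriv _ _).ennreal_toReal
  have hr' : Measurable fun y ↦ ((μ.map Γ).rnDeriv (ν.map Γ) y).toReal :=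
    (Measure.measurable_rnDeriv _ _).ennreal_toReal
  have hg_int := integrable_rightLimExtend_comp hr (fun _ ↦ ENNReal.toReal_nonneg) hint
  have hg_int' := hf.rightLimExtend.integrable_comp_rnDeriv_map hac hΓ
    hf.measurable_rightLimExtend.stronglyMeasurable hf.continuousWithinAt_rightLimExtend hg_int
  rw [integral_comp_eq_integral_rightLimExtend_comp_add hr' (fun _ ↦ ENNReal.toReal_nonneg) hg_int',
    integral_comp_eq_integral_rightLimExtend_comp_add hr (fun _ ↦ ENNReal.toReal_nonneg) hg_int]
  gcongr ?_ + ?_ * _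
  · exact hf.rightLimExtend.integral_comp_rnDeriv_map_le hac hΓ
      hf.measurable_rightLimExtend.stronglyMeasurable hf.continuousWithinAt_rightLimExtend hg_int
  · exact sub_nonneg.2 hf.rightLimExtend_le
  · exact ENNReal.toReal_mono (measure_ne_top _ _) (measure_map_rnDeriv_toReal_eq_zero_le hac hΓ)
end

section
/- Let P and Q be probability measures on (X,F) with P̄_A ≤ P a truncated measure of the form P̄_A(B) := P̄(B ∩ 'good event') satisfying P̄ - P̄_A ≥ 0 and P̄_A(X) = p, where P̄ is a probability measure with P̄_A ≪ Q. Then the total variation distance satisfies ‖Q - P̄‖_TV ≤ (1/2)·√( E_Q[(dP̄_A/dQ)²] - 1 ) + ( √(2(1-p)) + (1-p) )/2. -/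
/-!
Write `f = dP̄_A/dQ`. The triangle inequality through `P̄_A` splits `‖Q - P̄‖_TV` into
`‖Q - P̄_A‖_TV ≤ ½ ∫ |1 - f| dQ` and `‖P̄_A - P̄‖_TV ≤ ½ (1 - p)`, the latter because `P̄ - P̄_A` is
a measure of mass `1 - p`. By Cauchy–Schwarz, `∫ |1 - f| dQ ≤ √(∫ (1 - f)² dQ)`, and
`∫ (1 - f)² dQ = (E_Q[f²] - 1) + 2 (1 - p)`; subadditivity of `√` finishes.
-/

open MeasureTheory

/-- Total variation distance between finite measures:
`‖μ - ν‖_TV = (1/2) ∫ |dμ - dν|`. -/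
noncomputable def tvDist {X : Type*} [MeasurableSpace X] (μ ν : Measure X)
    [IsFiniteMeasure μ] [IsFiniteMeasure ν] : ℝ :=
  (1 / 2) * ((μ.toSignedMeasure - ν.toSignedMeasure).totalVariation Set.univ).toReal

lemma Real.sqrt_add_le_sqrt_add_sqrt (a b : ℝ) : √(a + b) ≤ √a + √b := by
  rcases le_total a 0 with ha | ha
  · exact (Real.sqrt_le_sqrt (by linarith)).trans (le_add_of_nonneg_left (Real.sqrt_nonneg a))
  rcases le_total b 0 with hb | hb
  · exact (Real.sqrt_le_sqrt (by linarith)).trans (le_add_of_nonneg_right (Real.sqrt_nonneg b))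
  rw [Real.sqrt_le_iff]
  refine ⟨by positivity, ?_⟩
  nlinarith [Real.sq_sqrt ha, Real.sq_sqrt hb, Real.sqrt_nonneg a, Real.sqrt_nonneg b]

section Integral

variable {Ω : Type*} [MeasurableSpace Ω] {μ : Measure Ω} [IsProbabilityMeasure μ] {g : Ω → ℝ}

lemma integral_abs_le_sqrt_integral_sq (hg : MemLp g 2 μ) :
    ∫ x, |g x| ∂μ ≤ √(∫ x, g x ^ 2 ∂μ) := by
  rw [Real.le_sqrt (integral_nonneg fun _ ↦ abs_nonneg _) (integral_nonneg fun _ ↦ sq_nonneg _)]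
  have h := ProbabilityTheory.variance_nonneg |g| μ
  rw [ProbabilityTheory.variance_eq_sub hg.abs] at h
  simpa [sq_abs] using h

lemma integral_one_sub_sq (hg : MemLp g 2 μ) :
    ∫ x, (1 - g x) ^ 2 ∂μ = 1 - 2 * ∫ x, g x ∂μ + ∫ x, g x ^ 2 ∂μ := by
  have hg₁ : Integrable g μ := hg.integrable one_le_two
  have hg₂ : Integrable (fun x ↦ g x ^ 2) μ := hg.integrable_sq
  have hlin : Integrable (fun x ↦ 1 - 2 * g x) μ := (integrable_const 1).sub (hg₁.const_mul 2)
  simp_rw [sub_sq, one_pow, mul_one]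
  rw [integral_add hlin hg₂, integral_sub (integrable_const 1) (hg₁.const_mul 2),
    integral_const_mul]
  simp

end Integral

section TotalVariation

variable {X : Type*} [MeasurableSpace X] {μ ν : Measure X} [IsFiniteMeasure μ] [IsFiniteMeasure ν]

lemma two_mul_tvDist_le_of_forall_enorm_le {m : Measure X} (hm : m Set.univ ≠ ⊤)
    (h : ∀ E, MeasurableSet E → ‖μ.real E - ν.real E‖ₑ ≤ m E) :
    2 * tvDist μ ν ≤ m.real Set.univ := by
  have hvar : (μ.toSignedMeasure - ν.toSignedMeasure).variation ≤ m :=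
    VectorMeasure.variation_le_of_forall_enorm_le fun E hE ↦ by
      simpa [Measure.toSignedMeasure_sub_apply hE] using h E hE
  rw [tvDist, SignedMeasure.totalVariation_eq_variation]
  have := ENNReal.toReal_mono hm (hvar Set.univ)
  rw [measureReal_def]
  linarith

lemma tvDist_triangle (ρ : Measure X) [IsFiniteMeasure ρ] :
    tvDist μ ν ≤ tvDist μ ρ + tvDist ρ ν := by
  set s := μ.toSignedMeasure - ρ.toSignedMeasure
  set t := ρ.toSignedMeasure - ν.toSignedMeasure
  have := two_mul_tvDist_le_of_forall_enorm_le (μ := μ) (ν := ν)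
    (m := s.totalVariation + t.totalVariation) (by finiteness) fun E hE ↦ by
      calc ‖μ.real E - ν.real E‖ₑ = ‖s E + t E‖ₑ := by
            simp [s, t, Measure.toSignedMeasure_sub_apply hE]
        _ ≤ ‖s E‖ₑ + ‖t E‖ₑ := enorm_add_le _ _
        _ ≤ _ := add_le_add (s.enorm_le_totalVariation E) (t.enorm_le_totalVariation E)
  rw [measureReal_add_apply] at this
  simp only [tvDist, measureReal_def] at this ⊢
  linarith

lemma two_mul_tvDist_le_of_le (h : μ ≤ ν) :
    2 * tvDist μ ν ≤ ν.real Set.univ - μ.real Set.univ := by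
  have hsub : ∀ E, MeasurableSet E → (ν - μ).real E = ν.real E - μ.real E := fun E hE ↦ by
    rw [measureReal_def, Measure.sub_apply hE h,
      ENNReal.toReal_sub_of_le (Measure.le_iff'.1 h E) (by finiteness)]
    rfl
  refine (two_mul_tvDist_le_of_forall_enorm_le (by finiteness) fun E hE ↦ ?_).trans_eq
    (hsub _ .univ)
  rw [← ofReal_measureReal, Real.enorm_eq_ofReal_abs, abs_sub_comm, ← hsub E hE,
    abs_of_nonneg measureReal_nonneg]

lemma two_mul_tvDist_le_integral_abs_one_sub_rnDeriv (hνμ : ν ≪ μ) :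
    2 * tvDist μ ν ≤ ∫ x, |1 - (ν.rnDeriv μ x).toReal| ∂μ := by
  set g : X → ℝ := fun x ↦ 1 - (ν.rnDeriv μ x).toReal
  have hg : Integrable g μ := (integrable_const 1).sub Measure.integrable_toReal_rnDeriv
  have hsetInt : ∀ E, μ.real E - ν.real E = ∫ x in E, g x ∂μ := fun E ↦ by
    rw [integral_sub (integrable_const 1).integrableOn
      Measure.integrable_toReal_rnDeriv.integrableOn, setIntegral_const,
      Measure.setIntegral_toReal_rnDeriv hνμ]
    simp
  refine (two_mul_tvDist_le_of_forall_enorm_le (m := μ.withDensity fun x ↦ ‖g x‖ₑ) ?_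
    fun E hE ↦ ?_).trans_eq ?_
  · rw [withDensity_apply _ .univ, Measure.restrict_univ]
    exact hg.hasFiniteIntegral.ne
  · rw [hsetInt, withDensity_apply _ hE]
    exact enorm_integral_le_lintegral_enorm _
  · rw [measureReal_def, withDensity_apply _ .univ, Measure.restrict_univ,
      ← integral_norm_eq_lintegral_enorm hg.aestronglyMeasurable]
    rfl

end TotalVariation

/-- Truncated χ² bound on the total variation distance:
if `P̄` is a probability measure, `P̄_A ≤ P̄` a truncated version with mass `p`, and
`P̄_A ≪ Q` for a probability measure `Q`, then
`‖Q - P̄‖_TV ≤ ½ √(E_Q[(dP̄_A/dQ)²] - 1) + (√(2(1-p)) + (1-p))/2`. -/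
theorem stmt16 {X : Type*} [MeasurableSpace X] (Pbar PA Q : Measure X)
    [IsProbabilityMeasure Pbar] [IsProbabilityMeasure Q] [IsFiniteMeasure PA]
    (hle : PA ≤ Pbar) (hac : PA ≪ Q)
    (p : ℝ) (hp : p = (PA Set.univ).toReal)
    (hint : Integrable (fun x => ((PA.rnDeriv Q x).toReal) ^ 2) Q) :
    tvDist Q Pbar
      ≤ (1 / 2) * Real.sqrt ((∫ x, ((PA.rnDeriv Q x).toReal) ^ 2 ∂Q) - 1)
        + (Real.sqrt (2 * (1 - p)) + (1 - p)) / 2 := by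
  set f : X → ℝ := fun x ↦ (PA.rnDeriv Q x).toReal
  have hf : MemLp f 2 Q := (memLp_two_iff_integrable_sq
    (Measure.measurable_rnDeriv PA Q).ennreal_toReal.aestronglyMeasurable).2 hint
  have hfp : ∫ x, f x ∂Q = p := by rw [hp]; exact Measure.integral_toReal_rnDeriv hac
  have hQ : 2 * tvDist Q PA ≤ √((∫ x, f x ^ 2 ∂Q) - 1 + 2 * (1 - p)) :=
    calc 2 * tvDist Q PA
        ≤ ∫ x, |1 - f x| ∂Q := two_mul_tvDist_le_integral_abs_one_sub_rnDeriv hac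
      _ ≤ √(∫ x, (1 - f x) ^ 2 ∂Q) := integral_abs_le_sqrt_integral_sq ((memLp_const 1).sub hf)
      _ = √((∫ x, f x ^ 2 ∂Q) - 1 + 2 * (1 - p)) := by
        rw [integral_one_sub_sq hf, hfp]
        congr 1
        ring
  have hP : 2 * tvDist PA Pbar ≤ 1 - p := by
    simpa [hp, measureReal_def] using two_mul_tvDist_le_of_le hle
  have hsqrt := Real.sqrt_add_le_sqrt_add_sqrt ((∫ x, f x ^ 2 ∂Q) - 1) (2 * (1 - p))
  linarith [tvDist_triangle (μ := Q) (ν := Pbar) PA]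
end

section
/- Let P be a prior probability distribution on a parameter space Θ, {P_θ}_{θ∈Θ} a family of probability measures on (X,F), {A_θ} a measurable family of events in F, A an action space, L : A × Θ → {0,1} a loss, and 𝔞 : X → A measurable. Define V^𝔞 := E_{θ∼P} P_θ[{L(𝔞(X),θ)=0} ∩ A_θ] and V₀ := sup_{a∈A} P_{θ∼P}[L(a,θ)=0]. Then for any probability measure Q on (X,F) with P_θ[·∩A_θ] ≪ Q for P-a.e. θ, V^𝔞 ≤ V₀ + √( V₀(1-V₀) · E_{θ∼P} ∫ (dP_θ[·;A_θ]/dQ)² dQ ). -/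
/-!
Write `f_θ = dP_θ[·;A_θ]/dQ` and `E_θ = {x | L(𝔞 x, θ) = 0}`, so that
`P_θ[E_θ; A_θ] = ∫_{E_θ} f_θ dQ`. Cauchy–Schwarz in `x` gives
`P_θ[E_θ; A_θ]² ≤ Q(E_θ) ∫ f_θ² dQ`, and Cauchy–Schwarz in `θ` then gives
`V² ≤ (E_{θ∼P} Q(E_θ)) · S` with `S = E_{θ∼P} ∫ f_θ² dQ`. By Fubini, `E_{θ∼P} Q(E_θ)` is
the `Q`-average over `x` of `P[L(𝔞 x, θ) = 0] ≤ V₀`, so `V² ≤ V₀ S`, which together with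
`V ≤ 1` is elementary to turn into `V ≤ V₀ + √(V₀ (1 - V₀) S)`.
-/

open MeasureTheory ProbabilityTheory
open scoped ENNReal

theorem le_add_sqrt_of_sq_le_mul {v v₀ S : ℝ} (hv₀ : 0 ≤ v₀) (hv : v ≤ 1)
    (h : v ^ 2 ≤ v₀ * S) : v ≤ v₀ + √(v₀ * (1 - v₀) * S) := by
  rcases le_or_gt v v₀ with hle | hlt
  · linarith [Real.sqrt_nonneg (v₀ * (1 - v₀) * S)]
  · have hv₀1 : v₀ < 1 := hlt.trans_le hv
    have : (v - v₀) ^ 2 ≤ v₀ * (1 - v₀) * S :=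
      calc (v - v₀) ^ 2 ≤ ((1 - v₀) * v) ^ 2 := by gcongr; nlinarith
        _ ≤ (1 - v₀) * v ^ 2 := by nlinarith [sq_nonneg v]
        _ ≤ (1 - v₀) * (v₀ * S) := by gcongr
        _ = v₀ * (1 - v₀) * S := by ring
    linarith [Real.le_sqrt_of_sq_le this]

namespace MeasureTheory

theorem lintegral_sq_le_mul_of_sq_le_mul {α : Type*} [MeasurableSpace α] {μ : Measure α}
    {f g h : α → ℝ≥0∞} (hg : AEMeasurable g μ) (hh : AEMeasurable h μ)
    (hfgh : ∀ᵐ x ∂μ, f x ^ 2 ≤ g x * h x) :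
    (∫⁻ x, f x ∂μ) ^ 2 ≤ (∫⁻ x, g x ∂μ) * ∫⁻ x, h x ∂μ := by
  have hf_le : ∀ᵐ x ∂μ, f x ≤ g x ^ (1 / 2 : ℝ) * h x ^ (1 / 2 : ℝ) := by
    filter_upwards [hfgh] with x hx
    rw [← ENNReal.mul_rpow_of_nonneg _ _ (by norm_num), one_div,
      ENNReal.le_rpow_inv_iff two_pos]
    exact_mod_cast hx
  have holder : ∫⁻ x, g x ^ (1 / 2 : ℝ) * h x ^ (1 / 2 : ℝ) ∂μ
      ≤ (∫⁻ x, g x ∂μ) ^ (1 / 2 : ℝ) * (∫⁻ x, h x ∂μ) ^ (1 / 2 : ℝ) := by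
    simpa only [Pi.mul_apply, ← ENNReal.rpow_mul, one_div,
      inv_mul_cancel₀ (two_ne_zero (α := ℝ)), ENNReal.rpow_one] using
      ENNReal.lintegral_mul_le_Lp_mul_Lq μ Real.HolderConjugate.two_two
        (hg.pow_const (1 / 2 : ℝ)) (hh.pow_const (1 / 2 : ℝ))
  calc (∫⁻ x, f x ∂μ) ^ 2
      ≤ ((∫⁻ x, g x ∂μ) ^ (1 / 2 : ℝ) * (∫⁻ x, h x ∂μ) ^ (1 / 2 : ℝ)) ^ 2 := by
        gcongr
        exact (lintegral_mono_ae hf_le).trans holder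
    _ = (∫⁻ x, g x ∂μ) * ∫⁻ x, h x ∂μ := by
        simp only [mul_pow, ← ENNReal.rpow_natCast, ← ENNReal.rpow_mul]
        norm_num

theorem Measure.sq_apply_le_mul_lintegral_rnDeriv_sq {α : Type*} [MeasurableSpace α]
    {μ ν : Measure α} [μ.HaveLebesgueDecomposition ν] (hμν : μ ≪ ν) {s : Set α}
    (hs : MeasurableSet s) :
    μ s ^ 2 ≤ ν s * ∫⁻ x, μ.rnDeriv ν x ^ 2 ∂ν := by
  have hμs : μ s = ∫⁻ x, s.indicator (μ.rnDeriv ν) x ∂ν := by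
    rw [lintegral_indicator hs, ← withDensity_apply _ hs,
      Measure.withDensity_rnDeriv_eq _ _ hμν]
  rw [hμs, ← lintegral_indicator_one hs]
  refine lintegral_sq_le_mul_of_sq_le_mul (measurable_const.indicator hs).aemeasurable
    ((Measure.measurable_rnDeriv μ ν).pow_const 2).aemeasurable (ae_of_all _ fun x => ?_)
  by_cases hx : x ∈ s <;> simp [hx]

theorem Measure.lintegral_rnDeriv_sq_eq_ofReal {α : Type*} [MeasurableSpace α]
    {μ ν : Measure α} [SigmaFinite μ]
    (hint : Integrable (fun x => (μ.rnDeriv ν x).toReal ^ 2) ν) :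
    ∫⁻ x, μ.rnDeriv ν x ^ 2 ∂ν = ENNReal.ofReal (∫ x, (μ.rnDeriv ν x).toReal ^ 2 ∂ν) := by
  rw [ofReal_integral_eq_lintegral_ofReal hint (ae_of_all _ fun x => sq_nonneg _)]
  refine lintegral_congr_ae ?_
  filter_upwards [Measure.rnDeriv_lt_top μ ν] with x hx
  rw [← ENNReal.toReal_pow, ENNReal.ofReal_toReal (ENNReal.pow_ne_top hx.ne)]

theorem sq_lintegral_le_mul_integral_rnDeriv_sq {Θ X : Type*} [MeasurableSpace Θ]
    [MeasurableSpace X] {P : Measure Θ} {Q : Measure X} [SigmaFinite Q] {μ : Θ → Measure X}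
    [∀ θ, SigmaFinite (μ θ)] {E : Θ → Set X} (hE : ∀ θ, MeasurableSet (E θ))
    (hQE : AEMeasurable (fun θ => Q (E θ)) P) (hac : ∀ᵐ θ ∂P, μ θ ≪ Q)
    (hint : ∀ᵐ θ ∂P, Integrable (fun x => ((μ θ).rnDeriv Q x).toReal ^ 2) Q)
    (hint' : Integrable (fun θ => ∫ x, ((μ θ).rnDeriv Q x).toReal ^ 2 ∂Q) P) :
    (∫⁻ θ, μ θ (E θ) ∂P) ^ 2 ≤ (∫⁻ θ, Q (E θ) ∂P) *
      ENNReal.ofReal (∫ θ, ∫ x, ((μ θ).rnDeriv Q x).toReal ^ 2 ∂Q ∂P) := by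
  rw [ofReal_integral_eq_lintegral_ofReal hint'
    (ae_of_all _ fun θ => integral_nonneg fun x => sq_nonneg _)]
  refine lintegral_sq_le_mul_of_sq_le_mul hQE
    hint'.aestronglyMeasurable.aemeasurable.ennreal_ofReal ?_
  filter_upwards [hac, hint] with θ hθ hθ'
  rw [← Measure.lintegral_rnDeriv_sq_eq_ofReal hθ']
  exact Measure.sq_apply_le_mul_lintegral_rnDeriv_sq hθ (hE θ)

theorem lintegral_measure_prodMk_left_le {α β : Type*} [MeasurableSpace α] [MeasurableSpace β]
    {μ : Measure α} {ν : Measure β} [SFinite μ] [SFinite ν] {B : Set (α × β)}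
    (hB : MeasurableSet B) {c : ℝ≥0∞} (hc : ∀ y, μ ((fun x => (x, y)) ⁻¹' B) ≤ c) :
    ∫⁻ x, ν (Prod.mk x ⁻¹' B) ∂μ ≤ c * ν Set.univ := by
  rw [← Measure.prod_apply hB, Measure.prod_apply_symm hB, ← lintegral_const]
  exact lintegral_mono hc

theorem measure_le_ofReal_iSup_toReal {α ι : Type*} [MeasurableSpace α] {μ : Measure α}
    [IsFiniteMeasure μ] (s : ι → Set α) (i : ι) :
    μ (s i) ≤ ENNReal.ofReal (⨆ j, (μ (s j)).toReal) := by
  have hbdd : BddAbove (Set.range fun j => (μ (s j)).toReal) :=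
    ⟨(μ Set.univ).toReal, Set.forall_mem_range.2 fun j =>
      ENNReal.toReal_mono (measure_ne_top μ _) (measure_mono (Set.subset_univ _))⟩
  exact ENNReal.le_ofReal_iff_toReal_le (measure_ne_top μ _)
    (Real.iSup_nonneg fun _ => ENNReal.toReal_nonneg) |>.2 (le_ciSup hbdd i)

end MeasureTheory

theorem ProbabilityTheory.Kernel.measurable_restrict_apply {α β : Type*} [MeasurableSpace α]
    [MeasurableSpace β] (κ : Kernel α β) [IsSFiniteKernel κ] {s t : Set (α × β)}
    (hs : MeasurableSet s) (ht : MeasurableSet t) :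
    Measurable fun a => (κ a).restrict (Prod.mk a ⁻¹' s) (Prod.mk a ⁻¹' t) := by
  simp_rw [Measure.restrict_apply (measurable_prodMk_left ht)]
  exact Kernel.measurable_kernel_prodMk_left (ht.inter hs)

theorem stmt19_general {Θ X 𝒜 : Type*} [MeasurableSpace Θ] [MeasurableSpace X]
    [MeasurableSpace 𝒜]
    (P : Measure Θ) [IsProbabilityMeasure P]
    (κ : Kernel Θ X) [IsMarkovKernel κ]
    (Q : Measure X) [IsProbabilityMeasure Q]
    (A : Θ → Set X) (hA : MeasurableSet {p : Θ × X | p.2 ∈ A p.1})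
    (L : 𝒜 → Θ → ℝ)
    (hL : Measurable fun p : 𝒜 × Θ => L p.1 p.2)
    (𝔞 : X → 𝒜) (h𝔞 : Measurable 𝔞)
    (hac : ∀ᵐ θ ∂P, (κ θ).restrict (A θ) ≪ Q)
    (hint1 : ∀ θ, Integrable
      (fun x => ((((κ θ).restrict (A θ)).rnDeriv Q x).toReal) ^ 2) Q)
    (hint2 : Integrable
      (fun θ => ∫ x, ((((κ θ).restrict (A θ)).rnDeriv Q x).toReal) ^ 2 ∂Q) P)
    (V V0 : ℝ)
    (hV : V = ∫ θ, ((κ θ).restrict (A θ) {x | L (𝔞 x) θ = 0}).toReal ∂P)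
    (hV0 : V0 = ⨆ a : 𝒜, (P {θ | L a θ = 0}).toReal) :
    V ≤ V0 + Real.sqrt (V0 * (1 - V0) *
      ∫ θ, (∫ x, ((((κ θ).restrict (A θ)).rnDeriv Q x).toReal) ^ 2 ∂Q) ∂P) := by
  set r : Θ → ℝ≥0∞ := fun θ => (κ θ).restrict (A θ) {x | L (𝔞 x) θ = 0}
  set S := ∫ θ, (∫ x, ((((κ θ).restrict (A θ)).rnDeriv Q x).toReal) ^ 2 ∂Q) ∂P
  have hB : MeasurableSet {p : Θ × X | L (𝔞 p.2) p.1 = 0} :=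
    hL.comp ((h𝔞.comp measurable_snd).prodMk measurable_fst) (measurableSet_singleton 0)
  have hr_le : ∀ θ, r θ ≤ 1 := fun θ => (Measure.restrict_apply_le _ _).trans prob_le_one
  have hV_eq : V = (∫⁻ θ, r θ ∂P).toReal :=
    hV.trans <| integral_toReal (κ.measurable_restrict_apply hA hB).aemeasurable
      (ae_of_all _ fun θ => (hr_le θ).trans_lt ENNReal.one_lt_top)
  have hV_le_one : V ≤ 1 := hV_eq ▸ ENNReal.toReal_le_of_le_ofReal zero_le_one
    (by simpa using (lintegral_mono hr_le).trans_eq (by simp))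
  have hV0_nonneg : 0 ≤ V0 := hV0 ▸ Real.iSup_nonneg fun _ => ENNReal.toReal_nonneg
  have hS_nonneg : 0 ≤ S := integral_nonneg fun θ => integral_nonneg fun x => sq_nonneg _
  have hQ_success : ∫⁻ θ, Q {x | L (𝔞 x) θ = 0} ∂P ≤ ENNReal.ofReal V0 := by
    simpa [hV0] using lintegral_measure_prodMk_left_le (μ := P) (ν := Q) hB
      fun x => measure_le_ofReal_iSup_toReal (fun a => {θ | L a θ = 0}) (𝔞 x)
  have hCS : (∫⁻ θ, r θ ∂P) ^ 2 ≤ ENNReal.ofReal V0 * ENNReal.ofReal S :=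
    (sq_lintegral_le_mul_integral_rnDeriv_sq (fun θ => measurable_prodMk_left hB)
      (measurable_measure_prodMk_left hB).aemeasurable hac (ae_of_all _ hint1) hint2).trans
      (by gcongr; exact hQ_success)
  have hV_sq : V ^ 2 ≤ V0 * S := by
    rw [hV_eq, ← ENNReal.toReal_pow, ← ENNReal.toReal_ofReal hV0_nonneg,
      ← ENNReal.toReal_ofReal hS_nonneg, ← ENNReal.toReal_mul]
    exact ENNReal.toReal_mono (by finiteness) hCS
  exact le_add_sqrt_of_sq_le_mul hV0_nonneg hV_le_one hV_sq

/-- Truncated χ² analogue of Fano's inequality (generalized Bayes-risk bound):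
with prior `P` on `Θ`, Markov kernel `κ` of data distributions, truncation events `A θ`,
binary loss `L`, decision rule `𝔞`, value `V = E_{θ∼P} P_θ[{L(𝔞(X),θ)=0} ; A_θ]` and
`V₀ = sup_a P_{θ∼P}[L(a,θ)=0]`, for any probability measure `Q`:
`V ≤ V₀ + √(V₀ (1-V₀) E_{θ∼P} D_{χ²+1}(P_θ[·;A_θ], Q))`. -/
theorem stmt19 {Θ X 𝒜 : Type*} [MeasurableSpace Θ] [MeasurableSpace X]
    [MeasurableSpace 𝒜]
    (P : Measure Θ) [IsProbabilityMeasure P]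
    (κ : Kernel Θ X) [IsMarkovKernel κ]
    (Q : Measure X) [IsProbabilityMeasure Q]
    (A : Θ → Set X) (hA : MeasurableSet {p : Θ × X | p.2 ∈ A p.1})
    (L : 𝒜 → Θ → ℝ) (hLbin : ∀ a θ, L a θ = 0 ∨ L a θ = 1)
    (hL : Measurable fun p : 𝒜 × Θ => L p.1 p.2)
    (𝔞 : X → 𝒜) (h𝔞 : Measurable 𝔞)
    (hac : ∀ᵐ θ ∂P, (κ θ).restrict (A θ) ≪ Q)
    (hint1 : ∀ θ, Integrable
      (fun x => ((((κ θ).restrict (A θ)).rnDeriv Q x).toReal) ^ 2) Q)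
    (hint2 : Integrable
      (fun θ => ∫ x, ((((κ θ).restrict (A θ)).rnDeriv Q x).toReal) ^ 2 ∂Q) P)
    (V V0 : ℝ)
    (hV : V = ∫ θ, ((κ θ).restrict (A θ) {x | L (𝔞 x) θ = 0}).toReal ∂P)
    (hV0 : V0 = ⨆ a : 𝒜, (P {θ | L a θ = 0}).toReal) :
    V ≤ V0 + Real.sqrt (V0 * (1 - V0) *
      ∫ θ, (∫ x, ((((κ θ).restrict (A θ)).rnDeriv Q x).toReal) ^ 2 ∂Q) ∂P) :=
  stmt19_general P κ Q A hA L hL 𝔞 h𝔞 hac hint1 hint2 V V0 hV hV0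
end
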